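/- arXiv:math/0609411 — 2 statements merged into one kernel-verified Lean document; each statement's English description precedes it below -/
import Mathlib

section
/- Let R be a principal ideal domain with field of fractions K. Suppose A is a finitely generated torsion R-module equipped with a nondegenerate symmetric linking form, i.e., an R-module isomorphism Ψ : A → Hom_R(A, K/R). Then for any proper submodule B ⊊ A, the orthogonal complement B^⊥ = { y ∈ A : Ψ(x)(y) = 0 for all x ∈ B } is nontrivial. -/
/-- The quotient `R`-module `K/R` where `K` is the field of fractions of `R`. -/
abbrev QuotField (R : Type*) [CommRing R] [IsDomain R] :=
  FractionRing R ⧸ LinearMap.range (Algebra.linearMap R (FractionRing R))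

/-!
Since `K/R` is divisible it is injective over a PID (Baer's criterion), and a nonzero torsion
element `m` with annihilator `(b)` is detected by the embedding `R ∙ m ≅ R/(b) → K/R`, `1 ↦ 1/b`.
Applied to the class of some `a ∉ B` in `A/B`, this gives `f : A/B → K/R` with `f a ≠ 0`.
Then `y = Ψ⁻¹ (f ∘ mkQ)` is nonzero, and by symmetry `Ψ x y = f (x mod B) = 0` for `x ∈ B`.
-/

theorem Module.Baer.of_smul_surjective {R Q : Type*} [CommRing R] [IsPrincipalIdealRing R]
    [AddCommGroup Q] [Module R Q]
    (hQ : ∀ r : R, r ≠ 0 → Function.Surjective fun q : Q ↦ r • q) : Module.Baer R Q := by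
  intro I g
  obtain ⟨b, rfl⟩ := IsPrincipalIdealRing.principal I
  rcases eq_or_ne b 0 with rfl | hb
  · refine ⟨0, fun x hx ↦ ?_⟩
    rw [Submodule.span_zero_singleton, Submodule.mem_bot] at hx
    subst hx
    exact (map_zero g).symm
  · obtain ⟨q, hq : b • q = _⟩ := hQ b hb (g ⟨b, Submodule.mem_span_singleton_self b⟩)
    refine ⟨LinearMap.toSpanSingleton R Q q, fun x hx ↦ ?_⟩
    obtain ⟨a, rfl⟩ := Submodule.mem_span_singleton.mp hx
    rw [LinearMap.toSpanSingleton_apply, smul_assoc, hq, ← map_smul]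
    rfl

namespace QuotField

variable {R : Type*} [CommRing R] [IsDomain R]

theorem smul_surjective {r : R} (hr : r ≠ 0) : Function.Surjective fun q : QuotField R ↦ r • q := by
  intro q
  obtain ⟨k, rfl⟩ := Submodule.Quotient.mk_surjective _ q
  refine ⟨Submodule.Quotient.mk (k / algebraMap R (FractionRing R) r), ?_⟩
  dsimp only
  rw [← Submodule.Quotient.mk_smul, Algebra.smul_def, mul_div_cancel₀ _ (by simpa using hr)]

theorem baer [IsPrincipalIdealRing R] : Module.Baer R (QuotField R) :=
  .of_smul_surjective fun _ ↦ smul_surjective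

theorem smul_mk_inv {b : R} (hb : b ≠ 0) :
    b • (Submodule.Quotient.mk (algebraMap R (FractionRing R) b)⁻¹ : QuotField R) = 0 := by
  rw [← Submodule.Quotient.mk_smul, Algebra.smul_def, mul_inv_cancel₀ (by simpa using hb),
    Submodule.Quotient.mk_eq_zero]
  exact ⟨1, by simp⟩

theorem mk_inv_ne_zero {b : R} (hb0 : b ≠ 0) (hb : ¬IsUnit b) :
    (Submodule.Quotient.mk (algebraMap R (FractionRing R) b)⁻¹ : QuotField R) ≠ 0 := by
  rw [Ne, Submodule.Quotient.mk_eq_zero]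
  rintro ⟨c, hc⟩
  refine hb (.of_mul_eq_one c (IsFractionRing.injective R (FractionRing R) ?_))
  rw [Algebra.linearMap_apply] at hc
  rw [map_mul, map_one, hc, mul_inv_cancel₀ (by simpa using hb0)]

theorem exists_linearMap_apply_ne_zero [IsPrincipalIdealRing R] {M : Type*} [AddCommGroup M]
    [Module R M] {m : M} (hm : m ≠ 0) {r : R} (hr : r ≠ 0) (hrm : r • m = 0) :
    ∃ f : M →ₗ[R] QuotField R, f m ≠ 0 := by
  set J := LinearMap.ker (LinearMap.toSpanSingleton R M m)
  obtain ⟨b, hJ⟩ := IsPrincipalIdealRing.principal J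
  have hb : b • m = 0 := (hJ ▸ Submodule.mem_span_singleton_self b : b ∈ J)
  have hb0 : b ≠ 0 := by
    rintro rfl
    have : r ∈ J := hrm
    rw [hJ, Submodule.span_zero_singleton, Submodule.mem_bot] at this
    exact hr this
  have hbu : ¬IsUnit b := fun hu ↦ hm (hu.smul_eq_zero.mp hb)
  set z : QuotField R := Submodule.Quotient.mk (algebraMap R (FractionRing R) b)⁻¹
  have hJz : J ≤ LinearMap.ker (LinearMap.toSpanSingleton R _ z) := by
    rw [hJ, Submodule.span_singleton_le_iff_mem]
    exact smul_mk_inv hb0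
  obtain ⟨F, hF⟩ := baer.extension_property (J.liftQ _ le_rfl)
    (LinearMap.ker_eq_bot.mp (J.ker_liftQ_eq_bot _ _ le_rfl)) (J.liftQ _ hJz)
  refine ⟨F, ?_⟩
  have hFm : F m = z := by
    simpa only [LinearMap.comp_apply, Submodule.liftQ_apply, LinearMap.toSpanSingleton_apply,
      one_smul] using LinearMap.congr_fun hF (Submodule.Quotient.mk 1)
  exact hFm ▸ mk_inv_ne_zero hb0 hbu

end QuotField

theorem linking_form_orthogonal_complement_nontrivial_general
    (R : Type*) [CommRing R] [IsDomain R] [IsPrincipalIdealRing R]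
    (A : Type*) [AddCommGroup A] [Module R A]
    (htors : Module.IsTorsion R A)
    (Ψ : A ≃ₗ[R] (A →ₗ[R] QuotField R))
    (hsymm : ∀ x y : A, Ψ x y = Ψ y x)
    (B : Submodule R A) (hB : B ≠ ⊤) :
    ∃ y : A, y ≠ 0 ∧ ∀ x ∈ B, Ψ x y = 0 := by
  obtain ⟨a, -, ha⟩ := SetLike.exists_of_lt hB.lt_top
  obtain ⟨r, hr⟩ := htors (x := a)
  have hm : B.mkQ a ≠ 0 := by simpa using ha
  obtain ⟨f, hf⟩ := QuotField.exists_linearMap_apply_ne_zero hm (nonZeroDivisors.coe_ne_zero r)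
    (by rw [← map_smul, ← Submonoid.smul_def, hr, map_zero])
  refine ⟨Ψ.symm (f ∘ₗ B.mkQ), fun h ↦ hf ?_, fun x hx ↦ ?_⟩
  · simpa using LinearMap.congr_fun (Ψ.symm.map_eq_zero_iff.mp h) a
  · rw [hsymm, Ψ.apply_symm_apply]
    simp [(Submodule.Quotient.mk_eq_zero B).mpr hx]

theorem linking_form_orthogonal_complement_nontrivial
    (R : Type*) [CommRing R] [IsDomain R] [IsPrincipalIdealRing R]
    (A : Type*) [AddCommGroup A] [Module R A] [Module.Finite R A]
    (htors : Module.IsTorsion R A)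
    (Ψ : A ≃ₗ[R] (A →ₗ[R] QuotField R))
    (hsymm : ∀ x y : A, Ψ x y = Ψ y x)
    (B : Submodule R A) (hB : B ≠ ⊤) :
    ∃ y : A, y ≠ 0 ∧ ∀ x ∈ B, Ψ x y = 0 :=
  linking_form_orthogonal_complement_nontrivial_general R A htors Ψ hsymm B hB
end

section
/- Let R be a principal ideal domain with field of fractions K, and let A be a nontrivial finitely generated torsion R-module. Then Hom_R(A, K/R) is nontrivial. -/
theorem Module.Finite.exists_surjective_quotient_isMaximal (R A : Type*) [CommRing R]
    [AddCommGroup A] [Module R A] [Module.Finite R A] [Nontrivial A] :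
    ∃ (I : Ideal R) (f : A →ₗ[R] R ⧸ I), I.IsMaximal ∧ Function.Surjective f := by
  obtain ⟨N, hN⟩ := IsCoatomic.exists_coatom (α := Submodule R A)
  obtain ⟨I, hI, ⟨e⟩⟩ := isSimpleModule_iff_quot_maximal.mp (isSimpleModule_iff_isCoatom.mpr hN)
  exact ⟨I, e.toLinearMap ∘ₗ N.mkQ, hI, e.surjective.comp N.mkQ_surjective⟩

theorem Module.IsTorsion.ne_bot_of_surjective {R A : Type*} [CommRing R] [Nontrivial R]
    [AddCommGroup A] [Module R A] (htors : Module.IsTorsion R A) {I : Ideal R}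
    {f : A →ₗ[R] R ⧸ I} (hf : Function.Surjective f) : I ≠ ⊥ := by
  obtain ⟨a, ha⟩ := hf (Submodule.Quotient.mk 1)
  obtain ⟨r, hra⟩ := @htors a
  have hr : (r : R) • (Submodule.Quotient.mk 1 : R ⧸ I) = 0 := by
    rw [← ha, ← map_smul, ← Submonoid.smul_def, hra, map_zero]
  rw [← Submodule.Quotient.mk_smul, smul_eq_mul, mul_one, Submodule.Quotient.mk_eq_zero] at hr
  exact fun hI => nonZeroDivisors.coe_ne_zero r (by rwa [hI, Submodule.mem_bot] at hr)

namespace QuotField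

variable {R : Type*} [CommRing R] [IsDomain R]

theorem mk_inv_algebraMap_ne_zero {q : R} (hq : q ≠ 0) (hqu : ¬IsUnit q) :
    (Submodule.Quotient.mk (algebraMap R (FractionRing R) q)⁻¹ : QuotField R) ≠ 0 := by
  intro h
  obtain ⟨r, hr⟩ := (Submodule.Quotient.mk_eq_zero _).mp h
  refine hqu (.of_mul_eq_one r (IsFractionRing.injective R (FractionRing R) ?_))
  rw [Algebra.linearMap_apply] at hr
  rw [map_mul, hr, map_one, mul_inv_cancel₀ (by simpa using hq)]

noncomputable def divBy (q : R) : R →ₗ[R] QuotField R :=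
  (Submodule.mkQ _) ∘ₗ LinearMap.toSpanSingleton R (FractionRing R) (algebraMap R _ q)⁻¹

theorem divBy_apply (q r : R) :
    divBy q r = Submodule.Quotient.mk (r • (algebraMap R (FractionRing R) q)⁻¹) := rfl

theorem divBy_self {q : R} (hq : q ≠ 0) : divBy q q = 0 := by
  rw [divBy_apply, Submodule.Quotient.mk_eq_zero, Algebra.smul_def,
    mul_inv_cancel₀ (by simpa using hq)]
  exact ⟨1, map_one (algebraMap R _)⟩

noncomputable def ofQuotSpanSingleton {q : R} (hq : q ≠ 0) : (R ⧸ R ∙ q) →ₗ[R] QuotField R :=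
  Submodule.liftQSpanSingleton q (divBy q) (divBy_self hq)

theorem ofQuotSpanSingleton_ne_zero {q : R} (hq : q ≠ 0) (hqu : ¬IsUnit q) :
    ofQuotSpanSingleton hq ≠ 0 := fun h => by
  have h1 := LinearMap.congr_fun h (Submodule.Quotient.mk 1)
  rw [ofQuotSpanSingleton, Submodule.liftQSpanSingleton_apply, divBy_apply, one_smul] at h1
  exact mk_inv_algebraMap_ne_zero hq hqu h1

theorem exists_linearMap_quotient_ne_zero [IsPrincipalIdealRing R] {I : Ideal R}
    (hbot : I ≠ ⊥) (htop : I ≠ ⊤) : ∃ f : (R ⧸ I) →ₗ[R] QuotField R, f ≠ 0 := by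
  obtain ⟨q, rfl⟩ := (IsPrincipalIdealRing.principal I).principal
  have hq : q ≠ 0 := fun h => hbot (Submodule.span_singleton_eq_bot.mpr h)
  exact ⟨ofQuotSpanSingleton hq,
    ofQuotSpanSingleton_ne_zero hq (mt Ideal.span_singleton_eq_top.mpr htop)⟩

end QuotField

theorem exists_nonzero_hom_to_quotField
    (R : Type*) [CommRing R] [IsDomain R] [IsPrincipalIdealRing R]
    (A : Type*) [AddCommGroup A] [Module R A] [Module.Finite R A]
    [Nontrivial A] (htors : Module.IsTorsion R A) :
    ∃ f : A →ₗ[R] QuotField R, f ≠ 0 := by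
  obtain ⟨I, π, hI, hπ⟩ := Module.Finite.exists_surjective_quotient_isMaximal R A
  obtain ⟨g, hg⟩ :=
    QuotField.exists_linearMap_quotient_ne_zero (htors.ne_bot_of_surjective hπ) hI.ne_top
  refine ⟨g ∘ₗ π, fun h => hg ?_⟩
  rwa [← LinearMap.zero_comp π, LinearMap.cancel_right hπ] at h
end
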